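/- The count N(d;2,2,2) of 2×2×2 non-negative integer arrays of total sum d and weight (2,2,2) satisfies: if d ≡ 0 (mod 4) then 384 · N(d;2,2,2) = d(d³+16d²+32d+32); if d ≡ 2 (mod 4) then 384 · N(d;2,2,2) = (d+2)(d³+14d²+4d+24); and if d is odd then N(d;2,2,2) = 0. -/
import Mathlib

open Finset

/-- `N d a b c` is the number of 2×2×2 arrays of non-negative integers with total
sum `d` whose slice sums in the three directions differ by `a`, `b`, `c`
respectively; it is the dimension of the weight space `W(d;a,b,c)`. -/
noncomputable def N (d a b c : ℕ) : ℕ :=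
  Set.ncard {e : Fin 2 × Fin 2 × Fin 2 → ℕ |
    (∑ i : Fin 2, ∑ j : Fin 2, ∑ k : Fin 2, e (i, j, k)) = d ∧
    (∑ j : Fin 2, ∑ k : Fin 2, e (0, j, k)) = (∑ j : Fin 2, ∑ k : Fin 2, e (1, j, k)) + a ∧
    (∑ i : Fin 2, ∑ k : Fin 2, e (i, 0, k)) = (∑ i : Fin 2, ∑ k : Fin 2, e (i, 1, k)) + b ∧
    (∑ i : Fin 2, ∑ j : Fin 2, e (i, j, 0)) = (∑ i : Fin 2, ∑ j : Fin 2, e (i, j, 1)) + c}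

def tri (k : ℕ) : ℕ := ∑ j ∈ range k, (k - j)
def tet (k : ℕ) : ℕ := ∑ j ∈ range k, tri (k - j)
def sqs (k : ℕ) : ℕ := ∑ j ∈ range k, (j+1)^2
def G1 (u : ℕ) : ℕ := ∑ w ∈ range u, (u - w) * (2*w+1)

lemma tri_zero : tri 0 = 0 := rfl

lemma tri_succ (k : ℕ) : tri (k+1) = tri k + (k+1) := by
  unfold tri
  rw [Finset.sum_range_succ']
  simp [Nat.succ_sub_succ]

lemma two_tri (k : ℕ) : 2 * tri k = k * (k+1) := by
  induction k with
  | zero => rfl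
  | succ n ih => rw [tri_succ, Nat.mul_add, ih]; ring

lemma tet_succ (k : ℕ) : tet (k+1) = tet k + tri (k+1) := by
  unfold tet
  rw [Finset.sum_range_succ']
  simp [Nat.succ_sub_succ]

lemma six_tet (k : ℕ) : 6 * tet k = k*(k+1)*(k+2) := by
  induction k with
  | zero => rfl
  | succ n ih =>
    have h := two_tri (n+1)
    rw [tet_succ, Nat.mul_add, ih]
    calc n*(n+1)*(n+2) + 6 * tri (n+1) = n*(n+1)*(n+2) + 3*(2*tri (n+1)) := by ring
    _ = n*(n+1)*(n+2) + 3*((n+1)*(n+2)) := by rw [h]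
    _ = (n+1)*(n+1+1)*(n+1+2) := by ring

lemma six_sqs (k : ℕ) : 6 * sqs k = k*(k+1)*(2*k+1) := by
  induction k with
  | zero => rfl
  | succ n ih =>
    rw [sqs, Finset.sum_range_succ, ← sqs, Nat.mul_add, ih]; ring

lemma oddsq (u : ℕ) : ∑ w ∈ range u, (2*w+1) = u^2 := by
  induction u with
  | zero => rfl
  | succ n ih => rw [Finset.sum_range_succ, ih]; ring

lemma G1_succ (u : ℕ) : G1 (u+1) = G1 u + (u+1)^2 := by
  have h1 : G1 (u+1) = (∑ w ∈ range (u+1), (u - w) * (2*w+1)) + ∑ w ∈ range (u+1), (2*w+1) := by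
    rw [G1, ← Finset.sum_add_distrib]
    refine Finset.sum_congr rfl fun w hw => ?_
    have hw' : w ≤ u := by simpa [Nat.lt_succ_iff] using Finset.mem_range.mp hw
    have h : u + 1 - w = (u - w) + 1 := by omega
    rw [h]; ring
  rw [h1, Finset.sum_range_succ, oddsq]
  simp [G1]

lemma sq_succ (u : ℕ) : sqs (u+1) = sqs u + (u+1)^2 := by
  rw [sqs, Finset.sum_range_succ, ← sqs]

lemma G1_eq_sqs (u : ℕ) : G1 u = sqs u := by
  induction u with
  | zero => rfl
  | succ n ih => rw [G1_succ, sq_succ, ih]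

lemma rev_sqs (u : ℕ) : ∑ j ∈ range u, (u - j)^2 = sqs u := by
  rw [sqs, ← Finset.sum_range_reflect]
  refine Finset.sum_congr rfl fun j hj => ?_
  have : j < u := Finset.mem_range.mp hj
  congr 1
  omega

lemma sum_sub (M K : ℕ) (h : K ≤ M) : ∑ x ∈ range M, (K - x) = tri K := by
  rw [← Finset.sum_range_add_sum_Ico _ h]
  have h2 : ∑ x ∈ Ico K M, (K - x) = 0 :=
    Finset.sum_eq_zero fun x hx => by
      have := (Finset.mem_Ico.mp hx).1; omega
  rw [h2, add_zero]; rfl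

lemma sum_tri_sub (M K : ℕ) (h : K ≤ M) : ∑ x ∈ range M, tri (K - x) = tet K := by
  rw [← Finset.sum_range_add_sum_Ico _ h]
  have h2 : ∑ x ∈ Ico K M, tri (K - x) = 0 :=
    Finset.sum_eq_zero fun x hx => by
      have := (Finset.mem_Ico.mp hx).1
      have h3 : K - x = 0 := by omega
      rw [h3, tri_zero]
  rw [h2, add_zero]; rfl

def ssf : ℕ → ℕ
  | 0 => 0
  | 1 => tet 1
  | (k+2) => tet (k+2) + ssf k

lemma ssf_add2 (k : ℕ) : ssf (k+2) = tet (k+2) + ssf k := rfl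

lemma chain2 : ∀ K M : ℕ, K ≤ 2*M → ∑ z ∈ range M, tet (K - 2*z) = ssf K := by
  intro K
  induction K using Nat.strong_induction_on with
  | _ K ih =>
    match K with
    | 0 =>
      intro M _
      have : ∀ z ∈ range M, tet (0 - 2*z) = 0 := fun z _ => by
        have h : 0 - 2*z = 0 := by omega
        rw [h]; rfl
      rw [Finset.sum_eq_zero this]; rfl
    | 1 =>
      intro M hM
      obtain ⟨M', rfl⟩ : ∃ M', M = M' + 1 := ⟨M - 1, by omega⟩
      rw [Finset.sum_range_succ']
      have h1 : ∀ z ∈ range M', tet (1 - 2*(z+1)) = 0 := fun z _ => by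
        have h : 1 - 2*(z+1) = 0 := by omega
        rw [h]; rfl
      rw [Finset.sum_eq_zero h1]
      simp [ssf]
    | (K+2) =>
      intro M hM
      obtain ⟨M', rfl⟩ : ∃ M', M = M' + 1 := ⟨M - 1, by omega⟩
      rw [Finset.sum_range_succ']
      have hcong : ∀ z ∈ range M', tet (K + 2 - 2*(z+1)) = tet (K - 2*z) := by
        intro z _; congr 1; omega
      rw [Finset.sum_congr rfl hcong, ih K (by omega) M' (by omega), ssf_add2]
      simp [add_comm]

lemma ssf_even (s : ℕ) : 48 * ssf (2*s) = 16*s^4+64*s^3+80*s^2+32*s := by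
  induction s with
  | zero => rfl
  | succ n ih =>
    have h2 : 2*(n+1) = 2*n+2 := by ring
    rw [h2, ssf_add2, Nat.mul_add, ih]
    have ht : 48 * tet (2*n+2) = 8*((2*n+2)*(2*n+3)*(2*n+4)) := by
      calc 48 * tet (2*n+2) = 8 * (6 * tet (2*n+2)) := by ring
      _ = _ := by rw [six_tet]
    rw [ht]; ring

lemma ssf_odd (s : ℕ) : 48 * ssf (2*s+1) = 16*s^4+96*s^3+200*s^2+168*s+48 := by
  induction s with
  | zero => rfl
  | succ n ih =>
    have h2 : 2*(n+1)+1 = (2*n+1)+2 := by ring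
    rw [h2, ssf_add2, Nat.mul_add, ih]
    have ht : 48 * tet (2*n+1+2) = 8*((2*n+3)*(2*n+4)*(2*n+5)) := by
      calc 48 * tet (2*n+1+2) = 8 * (6 * tet (2*n+3)) := by ring_nf
      _ = _ := by rw [six_tet]
    rw [ht]; ring

def ppc (K : ℕ) : ℕ := ∑ w ∈ range K, (min w (K - w) * (K - w) + min (w+1) (K - w) * (K - w))

lemma ppc_split_even (u : ℕ) : ppc (2*u) = (G1 u + u^2 * u) + 2 * sqs u := by
  rw [ppc, Finset.range_eq_Ico, ← Finset.sum_Ico_consecutive _ (Nat.zero_le u) (by omega : u ≤ 2*u)]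
  congr 1
  · rw [← Finset.range_eq_Ico]
    have h : ∀ w ∈ range u, (min w (2*u - w) * (2*u - w) + min (w+1) (2*u - w) * (2*u - w))
        = (u - w)*(2*w+1) + (2*w+1)*u := by
      intro w hw
      have hw' : w < u := Finset.mem_range.mp hw
      have h1 : min w (2*u - w) = w := by omega
      have h2 : min (w+1) (2*u - w) = w+1 := by omega
      have h3 : 2*u - w = (u - w) + u := by omega
      rw [h1, h2, h3]; ring
    rw [Finset.sum_congr rfl h, Finset.sum_add_distrib, ← Finset.sum_mul, oddsq, G1]
  · rw [Finset.sum_Ico_eq_sum_range]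
    have h0 : 2*u - u = u := by omega
    rw [h0]
    have h : ∀ j ∈ range u, (min (u+j) (2*u - (u+j)) * (2*u - (u+j)) + min (u+j+1) (2*u - (u+j)) * (2*u - (u+j))) = 2 * (u - j)^2 := by
      intro j hj
      have hj' : j < u := Finset.mem_range.mp hj
      have h1 : 2*u - (u+j) = u - j := by omega
      rw [h1]
      have h2 : min (u+j) (u - j) = u - j := by omega
      have h3 : min (u+j+1) (u - j) = u - j := by omega
      rw [h2, h3]; ring
    rw [Finset.sum_congr rfl h, ← Finset.mul_sum, rev_sqs]

lemma ppc_split_odd (u : ℕ) : ppc (2*u+1) = (G1 (u+1) + (u+1)^2 * u) + 2 * sqs u := by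
  rw [ppc, Finset.range_eq_Ico, ← Finset.sum_Ico_consecutive _ (Nat.zero_le (u+1)) (by omega : u+1 ≤ 2*u+1)]
  congr 1
  · rw [← Finset.range_eq_Ico]
    have h : ∀ w ∈ range (u+1), (min w (2*u+1 - w) * (2*u+1 - w) + min (w+1) (2*u+1 - w) * (2*u+1 - w))
        = (u+1 - w)*(2*w+1) + (2*w+1)*u := by
      intro w hw
      have hw' : w < u+1 := Finset.mem_range.mp hw
      have h1 : min w (2*u+1 - w) = w := by omega
      have h2 : min (w+1) (2*u+1 - w) = w+1 := by omega
      have h3 : 2*u+1 - w = (u+1 - w) + u := by omega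
      rw [h1, h2, h3]; ring
    rw [Finset.sum_congr rfl h, Finset.sum_add_distrib, ← Finset.sum_mul, oddsq, G1]
  · rw [Finset.sum_Ico_eq_sum_range]
    have h0 : 2*u+1 - (u+1) = u := by omega
    rw [h0]
    have h : ∀ j ∈ range u, (min (u+1+j) (2*u+1 - (u+1+j)) * (2*u+1 - (u+1+j)) + min (u+1+j+1) (2*u+1 - (u+1+j)) * (2*u+1 - (u+1+j))) = 2 * (u - j)^2 := by
      intro j hj
      have hj' : j < u := Finset.mem_range.mp hj
      have h1 : 2*u+1 - (u+1+j) = u - j := by omega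
      rw [h1]
      have h2 : min (u+1+j) (u - j) = u - j := by omega
      have h3 : min (u+1+j+1) (u - j) = u - j := by omega
      rw [h2, h3]; ring
    rw [Finset.sum_congr rfl h, ← Finset.mul_sum, rev_sqs]

lemma six_ppc_even (u : ℕ) : 6 * ppc (2*u) = 3*(u*(u+1)*(2*u+1)) + 6*u^3 := by
  rw [ppc_split_even, G1_eq_sqs]
  calc 6 * ((sqs u + u^2*u) + 2*sqs u) = 3*(6*sqs u) + 6*u^3 := by ring
  _ = _ := by rw [six_sqs]

lemma six_ppc_odd (u : ℕ) : 6 * ppc (2*u+1) = (u+1)*(u+2)*(2*u+3) + 6*(u*(u+1)^2) + 2*(u*(u+1)*(2*u+1)) := by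
  rw [ppc_split_odd, G1_eq_sqs]
  have h1 := six_sqs (u+1)
  have h2 := six_sqs u
  calc 6 * ((sqs (u+1) + (u+1)^2*u) + 2*sqs u) = 6*sqs (u+1) + 6*(u*(u+1)^2) + 2*(6*sqs u) := by ring
  _ = _ := by rw [h1, h2]; ring

def gs (m : ℕ) : ℕ := ∑ j ∈ range m, ppc (j+1)

-- q = (z, w, x, y)
def box4 (m : ℕ) : Finset (ℕ × ℕ × ℕ × ℕ) := range m ×ˢ range m ×ˢ range m ×ˢ range m

def Dset (m : ℕ) : Finset (ℕ × ℕ × ℕ × ℕ) :=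
  (box4 m).filter (fun q => (q.2.1 + q.2.2.1 + q.1 + 1 ≤ m ∧ q.2.1 + q.2.2.2 + q.1 + 1 ≤ m ∧
    q.2.2.1 + q.2.2.2 + q.1 + 1 ≤ m) ∧ m ≤ q.2.1 + q.2.2.1 + q.2.2.2 + 2*q.1 + 3)

def Gset (m : ℕ) : Finset (ℕ × ℕ × ℕ × ℕ) :=
  (box4 m).filter (fun q => q.2.1 + q.2.2.1 + q.1 + 1 ≤ m ∧ q.2.1 + q.2.2.2 + q.1 + 1 ≤ m ∧
    q.2.2.1 + q.2.2.2 + q.1 + 1 ≤ m)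

def Eset (m : ℕ) : Finset (ℕ × ℕ × ℕ × ℕ) :=
  (box4 m).filter (fun q => q.2.1 + q.2.2.1 + q.2.2.2 + 2*q.1 + 4 ≤ m)

lemma cardDE (m : ℕ) : (Dset m).card + (Eset m).card = (Gset m).card := by
  classical
  have h := Finset.card_filter_add_card_filter_not
    (s := Gset m) (p := fun q : ℕ × ℕ × ℕ × ℕ => m ≤ q.2.1 + q.2.2.1 + q.2.2.2 + 2*q.1 + 3)
  have h1 : (Gset m).filter (fun q => m ≤ q.2.1 + q.2.2.1 + q.2.2.2 + 2*q.1 + 3) = Dset m := by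
    rw [Gset, Dset, Finset.filter_filter]
  have h2 : (Gset m).filter (fun q => ¬ m ≤ q.2.1 + q.2.2.1 + q.2.2.2 + 2*q.1 + 3) = Eset m := by
    rw [Gset, Eset, Finset.filter_filter]
    apply Finset.filter_congr
    rintro ⟨z, w, x, y⟩ _
    simp only []
    constructor
    · rintro ⟨⟨a, b, c⟩, hd⟩; omega
    · intro hd; omega
  rw [h1, h2] at h
  exact h

lemma cardE_eq (m : ℕ) : (Eset m).card = ssf (m - 3) := by
  have h0 : (Eset m).card = ∑ z ∈ range m, ∑ w ∈ range m, ∑ x ∈ range m, ∑ y ∈ range m,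
      if w + x + y + 2*z + 4 ≤ m then 1 else 0 := by
    rw [Eset, box4, Finset.card_filter, Finset.sum_product]
    refine Finset.sum_congr rfl fun z _ => ?_
    rw [Finset.sum_product]
    refine Finset.sum_congr rfl fun w _ => ?_
    rw [Finset.sum_product]
  rw [h0]
  have h1 : ∀ z ∈ range m, (∑ w ∈ range m, ∑ x ∈ range m, ∑ y ∈ range m,
      if w + x + y + 2*z + 4 ≤ m then 1 else 0) = tet (m - 3 - 2*z) := by
    intro z _
    have hw : ∀ w ∈ range m, (∑ x ∈ range m, ∑ y ∈ range m,
        if w + x + y + 2*z + 4 ≤ m then 1 else 0) = tri (m - (2*z + 3) - w) := by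
      intro w _
      have hx : ∀ x ∈ range m, (∑ y ∈ range m, if w + x + y + 2*z + 4 ≤ m then 1 else 0)
          = (m - (w + 2*z + 3)) - x := by
        intro x _
        rw [← Finset.card_filter]
        have hf : (range m).filter (fun y => w + x + y + 2*z + 4 ≤ m)
            = range ((m - (w + 2*z + 3)) - x) := by
          ext y; simp only [Finset.mem_filter, Finset.mem_range]; omega
        rw [hf, Finset.card_range]
      rw [Finset.sum_congr rfl hx, sum_sub m _ (by omega)]
      congr 1; omega
    rw [Finset.sum_congr rfl hw]
    have hc : ∀ w ∈ range m, tri (m - (2*z+3) - w) = tri ((m - (2*z+3)) - w) := fun w _ => rfl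
    rw [Finset.sum_congr rfl hc, sum_tri_sub m _ (by omega)]
    congr 1; omega
  rw [Finset.sum_congr rfl h1]
  have h2 : ∀ z ∈ range m, tet (m - 3 - 2*z) = tet ((m - 3) - 2*z) := fun z _ => rfl
  rw [Finset.sum_congr rfl h2]
  exact chain2 (m-3) m (by omega)

lemma double_count (M K : ℕ) (hKM : K ≤ M) :
    (∑ w ∈ range M, ∑ x ∈ range M, if w + x + 1 ≤ K then K - max w x else 0) = ppc K := by
  have hpt : ∀ w x : ℕ, (if w + x + 1 ≤ K then K - max w x else 0)
      = (if x < w ∧ w + x + 1 ≤ K then K - w else 0)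
        + (if w ≤ x ∧ w + x + 1 ≤ K then K - x else 0) := by
    intro w x
    rcases le_total w x with h | h
    · rw [max_eq_right h]; split_ifs <;> omega
    · rw [max_eq_left h]; split_ifs <;> omega
  have h0 : (∑ w ∈ range M, ∑ x ∈ range M, if w + x + 1 ≤ K then K - max w x else 0)
      = (∑ w ∈ range M, ∑ x ∈ range M, if x < w ∧ w + x + 1 ≤ K then K - w else 0)
        + (∑ w ∈ range M, ∑ x ∈ range M, if w ≤ x ∧ w + x + 1 ≤ K then K - x else 0) := by
    rw [← Finset.sum_add_distrib]
    refine Finset.sum_congr rfl fun w _ => ?_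
    rw [← Finset.sum_add_distrib]
    exact Finset.sum_congr rfl fun x _ => hpt w x
  rw [h0]
  have hA : ∀ w ∈ range M, (∑ x ∈ range M, if x < w ∧ w + x + 1 ≤ K then K - w else 0)
      = min w (K - w) * (K - w) := by
    intro w _
    rw [← Finset.sum_filter]
    have hf : (range M).filter (fun x => x < w ∧ w + x + 1 ≤ K) = range (min w (K - w)) := by
      ext x; simp only [Finset.mem_filter, Finset.mem_range]; omega
    rw [hf, Finset.sum_const, Finset.card_range, smul_eq_mul]
  have hB : (∑ w ∈ range M, ∑ x ∈ range M, if w ≤ x ∧ w + x + 1 ≤ K then K - x else 0)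
      = ∑ x ∈ range M, min (x+1) (K - x) * (K - x) := by
    rw [Finset.sum_comm]
    refine Finset.sum_congr rfl fun x _ => ?_
    rw [← Finset.sum_filter]
    have hf : (range M).filter (fun w => w ≤ x ∧ w + x + 1 ≤ K) = range (min (x+1) (K - x)) := by
      ext w; simp only [Finset.mem_filter, Finset.mem_range]; omega
    rw [hf, Finset.sum_const, Finset.card_range, smul_eq_mul]
  rw [Finset.sum_congr rfl hA, hB, ← Finset.sum_add_distrib]
  rw [ppc, ← Finset.sum_range_add_sum_Ico _ hKM]
  have hz : ∑ w ∈ Ico K M, (min w (K - w) * (K - w) + min (w+1) (K - w) * (K - w)) = 0 := by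
    refine Finset.sum_eq_zero fun w hw => ?_
    have := (Finset.mem_Ico.mp hw).1
    have h : K - w = 0 := by omega
    rw [h]; ring
  rw [hz, add_zero]

lemma cardG_eq (m : ℕ) : (Gset m).card = gs m := by
  have h0 : (Gset m).card = ∑ z ∈ range m, ∑ w ∈ range m, ∑ x ∈ range m, ∑ y ∈ range m,
      if w + x + z + 1 ≤ m ∧ w + y + z + 1 ≤ m ∧ x + y + z + 1 ≤ m then 1 else 0 := by
    rw [Gset, box4, Finset.card_filter, Finset.sum_product]
    refine Finset.sum_congr rfl fun z _ => ?_
    rw [Finset.sum_product]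
    refine Finset.sum_congr rfl fun w _ => ?_
    rw [Finset.sum_product]
  rw [h0]
  have h1 : ∀ z ∈ range m, (∑ w ∈ range m, ∑ x ∈ range m, ∑ y ∈ range m,
      if w + x + z + 1 ≤ m ∧ w + y + z + 1 ≤ m ∧ x + y + z + 1 ≤ m then 1 else 0)
      = ppc (m - z) := by
    intro z hz
    have hzm : z < m := Finset.mem_range.mp hz
    have hw : ∀ w ∈ range m, ∀ x ∈ range m, (∑ y ∈ range m,
        if w + x + z + 1 ≤ m ∧ w + y + z + 1 ≤ m ∧ x + y + z + 1 ≤ m then 1 else 0)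
        = (if w + x + 1 ≤ m - z then (m - z) - max w x else 0) := by
      intro w _ x _
      by_cases hc : w + x + z + 1 ≤ m
      · have hc' : w + x + 1 ≤ m - z := by omega
        rw [if_pos hc']
        have hsimp : ∀ y, (if w + x + z + 1 ≤ m ∧ w + y + z + 1 ≤ m ∧ x + y + z + 1 ≤ m then (1:ℕ) else 0)
            = (if w + y + z + 1 ≤ m ∧ x + y + z + 1 ≤ m then 1 else 0) := by
          intro y; split_ifs <;> first | rfl | omega
        rw [Finset.sum_congr rfl (fun y _ => hsimp y), ← Finset.card_filter]
        have hf : (range m).filter (fun y => w + y + z + 1 ≤ m ∧ x + y + z + 1 ≤ m)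
            = range ((m - z) - max w x) := by
          ext y; simp only [Finset.mem_filter, Finset.mem_range]; omega
        rw [hf, Finset.card_range]
      · rw [if_neg (by omega)]
        refine Finset.sum_eq_zero fun y _ => ?_
        rw [if_neg (by tauto)]
    have hred : (∑ w ∈ range m, ∑ x ∈ range m, ∑ y ∈ range m,
        if w + x + z + 1 ≤ m ∧ w + y + z + 1 ≤ m ∧ x + y + z + 1 ≤ m then 1 else 0)
        = ∑ w ∈ range m, ∑ x ∈ range m, if w + x + 1 ≤ m - z then (m - z) - max w x else 0 := by
      refine Finset.sum_congr rfl fun w hwm => ?_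
      exact Finset.sum_congr rfl fun x hxm => hw w hwm x hxm
    rw [hred]
    exact double_count m (m - z) (by omega)
  rw [Finset.sum_congr rfl h1, gs]
  rw [← Finset.sum_range_reflect (fun j => ppc (j+1)) m]
  refine Finset.sum_congr rfl fun z hz => ?_
  have : z < m := Finset.mem_range.mp hz
  congr 1; omega

lemma gs_even (t : ℕ) : 48 * gs (2*t) = 48*t^4 + 96*t^3 + 72*t^2 + 24*t := by
  induction t with
  | zero => rfl
  | succ n ih =>
    have h1 : 2*(n+1) = (2*n+1)+1 := by ring
    rw [h1, gs, Finset.sum_range_succ, Finset.sum_range_succ, ← gs, Nat.mul_add, Nat.mul_add, ih]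
    have h2 : 48 * ppc (2*n+1) = 8 * (6 * ppc (2*n+1)) := by ring
    have h3 : 48 * ppc (2*n+1+1) = 8 * (6 * ppc (2*(n+1))) := by ring_nf
    rw [h2, h3, six_ppc_odd, six_ppc_even]
    ring
  
lemma gs_odd (t : ℕ) : 48 * gs (2*t+1) = 48*t^4 + 192*t^3 + 288*t^2 + 192*t + 48 := by
  rw [gs, Finset.sum_range_succ, ← gs, Nat.mul_add, gs_even]
  have h2 : 48 * ppc (2*t+1) = 8 * (6 * ppc (2*t+1)) := by ring
  rw [h2, six_ppc_odd]
  ring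

-- q = (z, w, x, y); e011 = w, e101 = x, e110 = y, e111 = z
def Phi (m : ℕ) (q : ℕ × ℕ × ℕ × ℕ) : Fin 2 × Fin 2 × Fin 2 → ℕ := fun p =>
  ![![![q.2.1 + q.2.2.1 + q.2.2.2 + 2*q.1 + 3 - m, m - 1 - (q.2.1 + q.2.2.1 + q.1)],
      ![m - 1 - (q.2.1 + q.2.2.2 + q.1), q.2.1]],
    ![![m - 1 - (q.2.2.1 + q.2.2.2 + q.1), q.2.2.1],
      ![q.2.2.2, q.1]]] p.1 p.2.1 p.2.2

lemma N_even (m : ℕ) : N (2*m) 2 2 2 = (Dset m).card := by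
  classical
  have hset : {e : Fin 2 × Fin 2 × Fin 2 → ℕ |
      (∑ i : Fin 2, ∑ j : Fin 2, ∑ k : Fin 2, e (i, j, k)) = 2*m ∧
      (∑ j : Fin 2, ∑ k : Fin 2, e (0, j, k)) = (∑ j : Fin 2, ∑ k : Fin 2, e (1, j, k)) + 2 ∧
      (∑ i : Fin 2, ∑ k : Fin 2, e (i, 0, k)) = (∑ i : Fin 2, ∑ k : Fin 2, e (i, 1, k)) + 2 ∧
      (∑ i : Fin 2, ∑ j : Fin 2, e (i, j, 0)) = (∑ i : Fin 2, ∑ j : Fin 2, e (i, j, 1)) + 2}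
      = ↑((Dset m).image (Phi m)) := by
    ext e
    simp only [Set.mem_setOf_eq, Finset.coe_image, Set.mem_image, Finset.mem_coe,
      Fin.sum_univ_two]
    constructor
    · rintro ⟨h1, h2, h3, h4⟩
      refine ⟨(e (1,1,1), e (0,1,1), e (1,0,1), e (1,1,0)), ?_, ?_⟩
      · simp only [Dset, box4, Finset.mem_filter, Finset.mem_product, Finset.mem_range]
        refine ⟨⟨?_, ?_, ?_, ?_⟩, ⟨?_, ?_, ?_⟩, ?_⟩ <;> omega
      · funext p
        obtain ⟨i, j, k⟩ := p
        fin_cases i <;> fin_cases j <;> fin_cases k <;>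
          simp only [Phi, Fin.mk_zero, Fin.mk_one, Matrix.cons_val_zero, Matrix.cons_val_one,
            Matrix.head_cons, Fin.isValue] <;> omega
    · rintro ⟨⟨z, w, x, y⟩, hq, rfl⟩
      simp only [Dset, box4, Finset.mem_filter, Finset.mem_product, Finset.mem_range] at hq
      refine ⟨?_, ?_, ?_, ?_⟩ <;>
        simp only [Phi, Matrix.cons_val_zero, Matrix.cons_val_one, Matrix.head_cons,
          Fin.isValue] <;> omega
  rw [N, hset, Set.ncard_coe_finset]
  apply Finset.card_image_of_injOn
  rintro ⟨z1, w1, x1, y1⟩ h1 ⟨z2, w2, x2, y2⟩ h2 heq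
  have e1 := congrFun heq (0,1,1)
  have e2 := congrFun heq (1,0,1)
  have e3 := congrFun heq (1,1,0)
  have e4 := congrFun heq (1,1,1)
  simp only [Phi, Matrix.cons_val_zero, Matrix.cons_val_one, Matrix.head_cons] at e1 e2 e3 e4
  simp_all

lemma N_odd (d : ℕ) (hd : Odd d) : N d 2 2 2 = 0 := by
  rw [N]
  convert Set.ncard_empty (Fin 2 × Fin 2 × Fin 2 → ℕ)
  ext e
  simp only [Set.mem_setOf_eq, Set.mem_empty_iff_false, iff_false]
  rintro ⟨h1, h2, h3, h4⟩
  simp only [Fin.sum_univ_two] at h1 h2 h3 h4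
  obtain ⟨k, rfl⟩ := hd
  omega

lemma Dcard1 : (Dset 1).card = 1 := by decide
lemma Dcard2 : (Dset 2).card = 5 := by decide
lemma Dcard3 : (Dset 3).card = 16 := by decide

/-- Dimension formulas for the weight space `W(d;2,2,2)`. -/
theorem dim_weight_space_222 (d : ℕ) :
    (d % 4 = 0 → 384 * N d 2 2 2 = d * (d ^ 3 + 16 * d ^ 2 + 32 * d + 32)) ∧
    (d % 4 = 2 → 384 * N d 2 2 2 = (d + 2) * (d ^ 3 + 14 * d ^ 2 + 4 * d + 24)) ∧
    (Odd d → N d 2 2 2 = 0) := by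
  refine ⟨?_, ?_, fun h => N_odd d h⟩
  · intro h
    obtain ⟨t, rfl⟩ : ∃ t, d = 2*(2*t) := ⟨d/4, by omega⟩
    rw [N_even]
    rcases Nat.lt_or_ge t 2 with ht | ht
    · interval_cases t
      · decide
      · decide
    · obtain ⟨s, rfl⟩ : ∃ s, t = s + 2 := ⟨t - 2, by omega⟩
      have h1 := cardDE (2*(s+2))
      have h2 := cardE_eq (2*(s+2))
      have h5 : 2*(s+2) - 3 = 2*s+1 := by omega
      rw [h5] at h2
      have h3 := cardG_eq (2*(s+2))
      have h7 : 48 * (Dset (2*(s+2))).card + 48 * ssf (2*s+1) = 48 * gs (2*(s+2)) := by omega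
      rw [ssf_odd] at h7
      rw [gs_even (s+2)] at h7
      zify at h7 ⊢
      linear_combination 8 * h7
  · intro h
    obtain ⟨t, rfl⟩ : ∃ t, d = 2*(2*t+1) := ⟨(d-2)/4, by omega⟩
    rw [N_even]
    rcases Nat.eq_zero_or_pos t with rfl | ht
    · decide
    · obtain ⟨s, rfl⟩ : ∃ s, t = s + 1 := ⟨t - 1, by omega⟩
      have h1 := cardDE (2*(s+1)+1)
      have h2 := cardE_eq (2*(s+1)+1)
      have h5 : 2*(s+1)+1 - 3 = 2*s := by omega
      rw [h5] at h2
      have h3 := cardG_eq (2*(s+1)+1)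
      have h7 : 48 * (Dset (2*(s+1)+1)).card + 48 * ssf (2*s) = 48 * gs (2*(s+1)+1) := by omega
      rw [ssf_even] at h7
      rw [gs_odd (s+1)] at h7
      zify at h7 ⊢
      linear_combination 8 * h7
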